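/- Generalized law of total variance: for Y square-integrable (with sufficient integrability for all intermediate terms) and a filtration 𝒢₁ ⊆ 𝒢₂ ⊆ ⋯ ⊆ 𝒢ₖ of sub-σ-algebras of ℱ, Var(Y) = Σ_{i=1}^{k+1} Q⟨i,1⟩_{𝒢₁}[ Q⟨i,2⟩_{𝒢₂}[ ⋯ Q⟨i,k+1⟩[Y] ⋯ ] ], where Q⟨i,j⟩ is the (conditional) variance operator at level j if i = j and the (conditional) expectation operator otherwise; the outermost operator (level 1) is unconditional and levels 2,…,k+1 condition on 𝒢₁,…,𝒢ₖ respectively. -/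

import Mathlib

open MeasureTheory

/-- Conditional expectation operator. -/
noncomputable def cE {Ω : Type*} [MeasurableSpace Ω] (μ : Measure Ω)
    (m : MeasurableSpace Ω) (Z : Ω → ℝ) : Ω → ℝ := μ[Z | m]

/-- Conditional variance operator `Var(Z | m) = E[Z² | m] - (E[Z | m])²`. -/
noncomputable def cV {Ω : Type*} [MeasurableSpace Ω] (μ : Measure Ω)
    (m : MeasurableSpace Ω) (Z : Ω → ℝ) : Ω → ℝ :=
  fun ω => (μ[fun ω' => (Z ω') ^ 2 | m]) ω - ((μ[Z | m]) ω) ^ 2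

/-- The inner iterated operator for the `i`-th term (with `i` the 1-based level of the
variance operator): levels `2, …, k+1` condition on `𝒢 0, …, 𝒢 (k-1)`, applying the
conditional variance at level `j + 2` when `i = j + 2` and conditional expectation
otherwise. -/
noncomputable def iterQ {Ω : Type*} [MeasurableSpace Ω] (μ : Measure Ω)
    (𝒢 : ℕ → MeasurableSpace Ω) (k : ℕ) (i : ℕ) (Y : Ω → ℝ) : Ω → ℝ :=
  (List.range k).foldr (fun j f => if i = j + 2 then cV μ (𝒢 j) f else cE μ (𝒢 j) f) Y

lemma iterQ_succ {Ω : Type*} [MeasurableSpace Ω] (μ : Measure Ω)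
    (𝒢 : ℕ → MeasurableSpace Ω) (k i : ℕ) (Y : Ω → ℝ) :
    iterQ μ 𝒢 (k + 1) i Y
      = iterQ μ 𝒢 k i (if i = k + 2 then cV μ (𝒢 k) Y else cE μ (𝒢 k) Y) := by
  simp [iterQ, List.range_succ, List.foldr_append]

lemma integral_iterQ_allE {Ω : Type*} [m0 : MeasurableSpace Ω] (μ : Measure Ω)
    [IsProbabilityMeasure μ] (𝒢 : ℕ → MeasurableSpace Ω) (hle : ∀ i, 𝒢 i ≤ m0)
    (k i : ℕ) (hi : ∀ j < k, i ≠ j + 2) (g : Ω → ℝ) :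
    ∫ ω, iterQ μ 𝒢 k i g ω ∂μ = ∫ ω, g ω ∂μ := by
  induction k generalizing g with
  | zero => simp [iterQ]
  | succ k ih =>
    haveI : SigmaFinite (μ.trim (hle k)) := by
      exact IsFiniteMeasure.toSigmaFinite _
    rw [iterQ_succ, if_neg (hi k (by omega))]
    rw [ih (fun j hj => hi j (by omega)) _]
    exact integral_condExp (hle k)

lemma aux_main {Ω : Type*} [m0 : MeasurableSpace Ω] (μ : Measure Ω)
    [IsProbabilityMeasure μ] (𝒢 : ℕ → MeasurableSpace Ω) (hle : ∀ i, 𝒢 i ≤ m0)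
    (k : ℕ) (Y : Ω → ℝ) (hY : AEStronglyMeasurable Y μ)
    (hbd : ∃ R : NNReal, ∀ᵐ ω ∂μ, |Y ω| ≤ R) :
    (∫ ω, (Y ω) ^ 2 ∂μ) - (∫ ω, Y ω ∂μ) ^ 2
      = ((∫ ω, (iterQ μ 𝒢 k 1 Y ω) ^ 2 ∂μ) - (∫ ω, iterQ μ 𝒢 k 1 Y ω ∂μ) ^ 2)
        + ∑ i ∈ Finset.Icc 2 (k + 1), ∫ ω, iterQ μ 𝒢 k i Y ω ∂μ := by
  induction k generalizing Y with
  | zero => simp [iterQ]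
  | succ k ih =>
    obtain ⟨R, hR⟩ := hbd
    haveI : SigmaFinite (μ.trim (hle k)) := IsFiniteMeasure.toSigmaFinite _
    set Y' : Ω → ℝ := cE μ (𝒢 k) Y with hY'def
    -- measurability and boundedness of Y'
    have hY'sm : AEStronglyMeasurable Y' μ :=
      (stronglyMeasurable_condExp.mono (hle k)).aestronglyMeasurable
    have hY'bd : ∀ᵐ ω ∂μ, |Y' ω| ≤ R := ae_bdd_condExp_of_ae_bdd hR
    -- integrabilities
    have hYtop : MemLp Y ⊤ μ :=
      memLp_top_of_bound hY R (hR.mono fun ω h => by simpa [Real.norm_eq_abs] using h)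
    have hY'top : MemLp Y' ⊤ μ :=
      memLp_top_of_bound hY'sm R (hY'bd.mono fun ω h => by simpa [Real.norm_eq_abs] using h)
    have hYint : Integrable Y μ := hYtop.integrable le_top
    have hY2int : Integrable (fun ω => Y ω ^ 2) μ :=
      (hYtop.mono_exponent le_top).integrable_sq
    have hY'2int : Integrable (fun ω => Y' ω ^ 2) μ :=
      (hY'top.mono_exponent le_top).integrable_sq
    have hcVint : Integrable (cV μ (𝒢 k) Y) μ := by
      have : cV μ (𝒢 k) Y = fun ω => (μ[fun ω' => (Y ω') ^ 2 | 𝒢 k]) ω - Y' ω ^ 2 := rfl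
      rw [this]
      exact integrable_condExp.sub hY'2int
    -- integral identities
    have hEY' : ∫ ω, Y' ω ∂μ = ∫ ω, Y ω ∂μ := integral_condExp (hle k)
    have hEcV : ∫ ω, cV μ (𝒢 k) Y ω ∂μ
        = (∫ ω, Y ω ^ 2 ∂μ) - ∫ ω, Y' ω ^ 2 ∂μ := by
      have h1 : ∫ ω, cV μ (𝒢 k) Y ω ∂μ
          = (∫ ω, (μ[fun ω' => (Y ω') ^ 2 | 𝒢 k]) ω ∂μ) - ∫ ω, Y' ω ^ 2 ∂μ :=
        integral_sub integrable_condExp hY'2int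
      rw [h1, integral_condExp (hle k)]
    -- rewrite iterQ at k+1
    have hQ1 : ∀ i, i ≠ k + 2 → iterQ μ 𝒢 (k + 1) i Y = iterQ μ 𝒢 k i Y' := by
      intro i hi; rw [iterQ_succ, if_neg hi]
    have hQ2 : ∫ ω, iterQ μ 𝒢 (k + 1) (k + 2) Y ω ∂μ = ∫ ω, cV μ (𝒢 k) Y ω ∂μ := by
      rw [iterQ_succ, if_pos rfl]
      exact integral_iterQ_allE μ 𝒢 hle k (k + 2) (fun j hj => by omega) _
    have hIH := ih Y' hY'sm ⟨R, hY'bd⟩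
    rw [Finset.sum_Icc_succ_top (by omega : 2 ≤ k + 1 + 1), hQ2,
      hQ1 1 (by omega),
      Finset.sum_congr rfl (fun i hi => by
        rw [hQ1 i (by simp only [Finset.mem_Icc] at hi; omega)])]
    rw [hEcV]
    have : (∫ ω, Y' ω ^ 2 ∂μ) - (∫ ω, Y' ω ∂μ) ^ 2
      = ((∫ ω, (iterQ μ 𝒢 k 1 Y' ω) ^ 2 ∂μ) - (∫ ω, iterQ μ 𝒢 k 1 Y' ω ∂μ) ^ 2)
        + ∑ i ∈ Finset.Icc 2 (k + 1), ∫ ω, iterQ μ 𝒢 k i Y' ω ∂μ := hIH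
    rw [hEY'] at this
    linarith

theorem generalized_law_of_total_variance {Ω : Type*} [m0 : MeasurableSpace Ω]
    (μ : Measure Ω) [IsProbabilityMeasure μ] (Y : Ω → ℝ)
    (hYmeas : Measurable Y) (hYbdd : ∃ C, ∀ ω, |Y ω| ≤ C)
    (k : ℕ) (𝒢 : ℕ → MeasurableSpace Ω)
    (hmono : Monotone 𝒢) (hle : ∀ i, 𝒢 i ≤ m0) :
    (∫ ω, (Y ω) ^ 2 ∂μ) - (∫ ω, Y ω ∂μ) ^ 2
      = ((∫ ω, (iterQ μ 𝒢 k 1 Y ω) ^ 2 ∂μ) - (∫ ω, iterQ μ 𝒢 k 1 Y ω ∂μ) ^ 2)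
        + ∑ i ∈ Finset.Icc 2 (k + 1), ∫ ω, iterQ μ 𝒢 k i Y ω ∂μ := by
  obtain ⟨C, hC⟩ := hYbdd
  refine aux_main μ 𝒢 hle k Y hYmeas.aestronglyMeasurable ⟨C.toNNReal, ?_⟩
  filter_upwards with ω
  exact (hC ω).trans (Real.le_coe_toNNReal C)
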